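/- The L1 centrality of a vertex v_k in the graph symmetrized with respect to v_1 (the graph doubled with the two copies of v_1 identified) equals the L1 centrality of v_k in the original graph with the multiplicity of v_1 replaced by η_· + η_1. Concretely, with distances in the symmetrized graph given by d'(v_i, v_{j'}) = d(v_i, v_1) + d(v_1, v_j) between an original vertex v_i and a copied vertex v_{j'}, the maximand in the L1 centrality formula over original vertices reduces to Σ_i η_i'(d(v_i,v_k) - d(v_i,v_j)) with η_1' = η_· + η_1 and η_i' = η_i for i ≠ 1, normalized by 2η_·. -/

import Mathlib

/-!
Write `η' = η + η_· δ_{v₁}`. Since a copy `v_{i'}` sits at distance `d(·, v₁) + d(v₁, v_i)` from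
every original vertex, the copies contribute `η_· (d(v_k, v₁) - d(v_j, v₁))` to the numerator of
the competitor `v_j`, and exactly the same amount to that of its copy `v_{j'}`; so both numerators
equal `Σ_i η'_i (d(v_k, v_i) - d(v_j, v_i))`, and the total mass `2 η_·` is that of `η'`. The
original competitors thus give the terms of the original graph with multiplicities `η'`, while a
copy `v_{j'}` has the same numerator over the larger distance `d(v_j, v₁) + d(v₁, v_k) ≥ d(v_j, v_k)`,
so its term is dominated by that of `v_j`, and the copy `v_{k'}` contributes `0`.
-/

open Finset

/-- The L1 centrality of vertex `k` for a finite vertex set `V` with distances `d`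
and multiplicities `μ`. -/
noncomputable def L1Cent {V : Type*} [Fintype V] (d : V → V → ℝ) (μ : V → ℝ) (k : V) : ℝ :=
  1 - sSup ((fun j => max 0 ((∑ i, μ i * (d k i - d j i)) / ((∑ i, μ i) * d j k))) ''
      {j | j ≠ k})

/-- Distances in the graph symmetrized w.r.t. the vertex `v0`: the vertex set is
doubled (`Sum.inl` the original vertices, `Sum.inr` the copies, the copy of `v0`
coinciding with `v0`), and the distance between an original vertex and a copy
goes through `v0`. -/
def symDist {n : ℕ} (d : Fin n → Fin n → ℝ) (v0 : Fin n) :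
    Fin n ⊕ Fin n → Fin n ⊕ Fin n → ℝ
  | .inl i, .inl j => d i j
  | .inl i, .inr j => d i v0 + d v0 j
  | .inr i, .inl j => d i v0 + d v0 j
  | .inr i, .inr j => d i j

noncomputable def l1Excess {V : Type*} [Fintype V] (d : V → V → ℝ) (μ : V → ℝ) (k j : V) : ℝ :=
  max 0 ((∑ i, μ i * (d k i - d j i)) / ((∑ i, μ i) * d j k))

theorem L1Cent_eq_one_sub_sSup {V : Type*} [Fintype V] (d : V → V → ℝ) (μ : V → ℝ) (k : V) :
    L1Cent d μ k = 1 - sSup (l1Excess d μ k '' {j | j ≠ k}) :=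
  rfl

theorem l1Excess_nonneg {V : Type*} [Fintype V] (d : V → V → ℝ) (μ : V → ℝ) (k j : V) :
    0 ≤ l1Excess d μ k j :=
  le_max_left _ _

theorem max_zero_div_le_max_zero_div {N a b : ℝ} (hb : 0 < b) (hba : b ≤ a) :
    max 0 (N / a) ≤ max 0 (N / b) := by
  rcases le_total N 0 with hN | hN
  · rw [max_eq_left (div_nonpos_of_nonpos_of_nonneg hN (hb.le.trans hba))]
    exact le_max_left _ _
  · exact max_le_max le_rfl (div_le_div_of_nonneg_left hN hb hba)

theorem sum_update_add_self_mul {ι R : Type*} [Fintype ι] [DecidableEq ι]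
    [NonUnitalNonAssocSemiring R] (η G : ι → R) (v : ι) (c : R) :
    ∑ i, Function.update η v (c + η v) i * G i = ∑ i, η i * G i + c * G v := by
  have hupdate : Function.update η v (c + η v) = η + Pi.single v c := by
    ext i
    rcases eq_or_ne i v with rfl | hi
    · simp [add_comm]
    · simp [hi]
  simp [hupdate, add_mul, sum_add_distrib, Pi.single_apply]

theorem sum_update_add_self {ι R : Type*} [Fintype ι] [DecidableEq ι] [NonAssocSemiring R]
    (η : ι → R) (v : ι) (c : R) : ∑ i, Function.update η v (c + η v) i = ∑ i, η i + c := by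
  simpa using sum_update_add_self_mul η 1 v c

theorem sSup_image_elim_ne_inl {α : Type*} [Finite α] {f g : α → ℝ} {k : α}
    (hf : ∀ j, 0 ≤ f j) (hgk : g k = 0) (hgf : ∀ j, j ≠ k → g j ≤ f j) :
    sSup (Sum.elim f g '' {j | j ≠ Sum.inl k}) = sSup (f '' {j | j ≠ k}) := by
  have hbdd : BddAbove (f '' {j | j ≠ k}) := (Set.toFinite _).bddAbove
  have hbdd' : BddAbove (Sum.elim f g '' {j | j ≠ Sum.inl k}) := (Set.toFinite _).bddAbove
  have hsSup_nonneg : 0 ≤ sSup (f '' {j | j ≠ k}) :=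
    Real.sSup_nonneg (by rintro _ ⟨j, -, rfl⟩; exact hf j)
  apply le_antisymm
  · refine Real.sSup_le ?_ hsSup_nonneg
    rintro _ ⟨j | j, hj, rfl⟩
    · exact le_csSup hbdd ⟨j, fun h => hj (congrArg Sum.inl h), rfl⟩
    · rcases eq_or_ne j k with rfl | hjk
      · simpa [hgk] using hsSup_nonneg
      · exact (hgf j hjk).trans (le_csSup hbdd ⟨j, hjk, rfl⟩)
  · refine Real.sSup_le ?_ ?_
    · rintro _ ⟨j, hj, rfl⟩
      exact le_csSup hbdd' ⟨Sum.inl j, by simpa using hj, rfl⟩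
    · exact hgk ▸ le_csSup hbdd' ⟨Sum.inr k, by simp, rfl⟩

theorem sum_elim_self {α M : Type*} [Fintype α] [AddCommMonoid M] (η : α → M) :
    ∑ i, Sum.elim η η i = ∑ i, η i + ∑ i, η i := by
  simp only [Fintype.sum_sum_type, Sum.elim_inl, Sum.elim_inr]

section Symmetrized

variable {n : ℕ} (d : Fin n → Fin n → ℝ) (η : Fin n → ℝ) (v0 k : Fin n)

theorem sum_mul_symDist_inl_sub_inl (j : Fin n) :
    ∑ i, Sum.elim η η i * (symDist d v0 (.inl k) i - symDist d v0 (.inl j) i) =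
      ∑ i, η i * (d k i - d j i) + (∑ i, η i) * (d k v0 - d j v0) := by
  simp only [Fintype.sum_sum_type, Sum.elim_inl, Sum.elim_inr, symDist, sum_mul]
  congr 1
  exact sum_congr rfl fun i _ => by ring

theorem sum_mul_symDist_inl_sub_inr (j : Fin n) :
    ∑ i, Sum.elim η η i * (symDist d v0 (.inl k) i - symDist d v0 (.inr j) i) =
      ∑ i, η i * (d k i - d j i) + (∑ i, η i) * (d k v0 - d j v0) := by
  simp only [Fintype.sum_sum_type, Sum.elim_inl, Sum.elim_inr, symDist, sum_mul,
    ← sum_add_distrib]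
  exact sum_congr rfl fun i _ => by ring

theorem l1Excess_symDist_inl_inl (j : Fin n) :
    l1Excess (symDist d v0) (Sum.elim η η) (.inl k) (.inl j) =
      l1Excess d (Function.update η v0 ((∑ i, η i) + η v0)) k j := by
  rw [l1Excess, l1Excess, sum_mul_symDist_inl_sub_inl, sum_update_add_self_mul,
    sum_update_add_self, sum_elim_self]
  rfl

theorem l1Excess_symDist_inl_inr_self :
    l1Excess (symDist d v0) (Sum.elim η η) (.inl k) (.inr k) = 0 := by
  rw [l1Excess, sum_mul_symDist_inl_sub_inr]
  simp

theorem l1Excess_symDist_inl_inr_le {j : Fin n} (hjk : 0 < d j k)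
    (htri : d j k ≤ d j v0 + d v0 k) (hsum : 0 < ∑ i, η i) :
    l1Excess (symDist d v0) (Sum.elim η η) (.inl k) (.inr j) ≤
      l1Excess d (Function.update η v0 ((∑ i, η i) + η v0)) k j := by
  rw [l1Excess, l1Excess, sum_mul_symDist_inl_sub_inr, sum_update_add_self_mul,
    sum_update_add_self, sum_elim_self]
  have hmass : 0 < (∑ i, η i) + ∑ i, η i := by positivity
  exact max_zero_div_le_max_zero_div (mul_pos hmass hjk) (mul_le_mul_of_nonneg_left htri hmass.le)

end Symmetrized

theorem l1cent_symmetrized_general {n : ℕ} (d : Fin n → Fin n → ℝ)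
    (hpos : ∀ i j, i ≠ j → 0 < d i j)
    (htri : ∀ i j l, d i l ≤ d i j + d j l)
    (η : Fin n → ℝ) (hsum : 0 < ∑ j, η j)
    (v0 k : Fin n) :
    L1Cent (symDist d v0) (Sum.elim η η) (Sum.inl k) =
      L1Cent d (Function.update η v0 ((∑ j, η j) + η v0)) k := by
  have hsplit : l1Excess (symDist d v0) (Sum.elim η η) (.inl k) =
      Sum.elim (l1Excess d (Function.update η v0 ((∑ j, η j) + η v0)) k)
        (fun j => l1Excess (symDist d v0) (Sum.elim η η) (.inl k) (.inr j)) := by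
    funext j
    cases j with
    | inl j => exact l1Excess_symDist_inl_inl d η v0 k j
    | inr j => rfl
  rw [L1Cent_eq_one_sub_sSup, L1Cent_eq_one_sub_sSup, hsplit,
    sSup_image_elim_ne_inl (l1Excess_nonneg _ _ k) (l1Excess_symDist_inl_inr_self d η v0 k)
      fun j hjk => l1Excess_symDist_inl_inr_le d η v0 k (hpos j k hjk) (htri j v0 k) hsum]

/-- The L1 centrality of an original vertex `v_k` in the graph symmetrized w.r.t.
`v0` (each copy carrying the multiplicity of its original) equals the L1 centrality
of `v_k` in the original graph with the multiplicity of `v0` replaced by `η_· + η_{v0}`. -/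
theorem l1cent_symmetrized {n : ℕ} (d : Fin n → Fin n → ℝ)
    (hsymm : ∀ i j, d i j = d j i)
    (hzero : ∀ i, d i i = 0)
    (hpos : ∀ i j, i ≠ j → 0 < d i j)
    (htri : ∀ i j l, d i l ≤ d i j + d j l)
    (η : Fin n → ℝ) (hη : ∀ j, 0 ≤ η j) (hsum : 0 < ∑ j, η j)
    (v0 k : Fin n) :
    L1Cent (symDist d v0) (Sum.elim η η) (Sum.inl k) =
      L1Cent d (Function.update η v0 ((∑ j, η j) + η v0)) k :=
  l1cent_symmetrized_general d hpos htri η hsum v0 k
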